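/- Let α be a real number. Suppose a, b_2 : (0,∞) → ℝ are functions with a differentiable and b_2 twice differentiable and nowhere vanishing, satisfying for all λ > 0 (with ' = d/dλ): −b_2(λ) b_2''(λ) + b_2'(λ)²/2 + 4 a'(λ) b_2(λ)² = 2 and −(λ/2) b_2''(λ) + b_2'(λ)/2 + 4 a'(λ) λ b_2(λ) + 2 b_2(λ)² = −2α. Then b_2 satisfies the Painlevé III equation b_2''(λ) − b_2'(λ)²/b_2(λ) + (1/λ)( b_2'(λ) + 4 b_2(λ)² + 4α ) + 4/b_2(λ) = 0 for all λ > 0. -/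

import Mathlib

/-!
Only the values of `a'`, `b₂`, `b₂'`, `b₂''` at a single point enter, so the statement is pointwise
algebra. `a'` occurs in both equations through `4 a' b₂²` and `4 a' λ b₂`, so `2 b₂ · (j = 3) − 2λ · (j = 4)`
eliminates it, leaving `λ b₂ b₂'' − λ b₂'² + b₂ b₂' + 4 b₂³ + 4α b₂ + 4λ = 0`: Painlevé III times `λ b₂`.
-/

section

variable {K : Type*} [Field K] {α x b db ddb da : K}

theorem painleveIII_mul_of_coupled_eqs [CharZero K]
    (h4 : -b * ddb + db ^ 2 / 2 + 4 * da * b ^ 2 = 2)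
    (h3 : -(x / 2) * ddb + db / 2 + 4 * da * x * b + 2 * b ^ 2 = -2 * α) :
    x * b * ddb - x * db ^ 2 + b * db + 4 * b ^ 3 + 4 * α * b + 4 * x = 0 := by
  linear_combination (-2 * x) * h4 + (2 * b) * h3

theorem painleveIII_of_mul_eq_zero (hx : x ≠ 0) (hb : b ≠ 0)
    (h : x * b * ddb - x * db ^ 2 + b * db + 4 * b ^ 3 + 4 * α * b + 4 * x = 0) :
    ddb - db ^ 2 / b + (1 / x) * (db + 4 * b ^ 2 + 4 * α) + 4 / b = 0 := by
  field_simp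
  linear_combination h

end

theorem coupled_painleve_III_k_one_reduces_to_painleve_III (α : ℝ) (a b2 : ℝ → ℝ)
    (hne : ∀ l ∈ Set.Ioi (0 : ℝ), b2 l ≠ 0)
    (h4 : ∀ l ∈ Set.Ioi (0 : ℝ),
      -(b2 l) * deriv (deriv b2) l + (deriv b2 l) ^ 2 / 2 + 4 * deriv a l * b2 l ^ 2 = 2)
    (h3 : ∀ l ∈ Set.Ioi (0 : ℝ),
      -(l / 2) * deriv (deriv b2) l + deriv b2 l / 2 + 4 * deriv a l * l * b2 l
        + 2 * b2 l ^ 2 = -2 * α) :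
    ∀ l ∈ Set.Ioi (0 : ℝ),
      deriv (deriv b2) l - (deriv b2 l) ^ 2 / b2 l
        + (1 / l) * (deriv b2 l + 4 * b2 l ^ 2 + 4 * α) + 4 / b2 l = 0 := fun l hl =>
  painleveIII_of_mul_eq_zero (ne_of_gt hl) (hne l hl)
    (painleveIII_mul_of_coupled_eqs (h4 l hl) (h3 l hl))
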